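/- arXiv:1403.4342 — 9 statements merged into one kernel-verified Lean document; each statement's English description precedes it below -/
import Mathlib

section
/- For every positive integer m and every real number c with 0 < c < 1, the triple sum Σ_{k=0}^{m-1} (1/k!) · Σ_{l=0}^{k} Σ_{j=0}^{l} (-1)^{k+l+j} · C(l,j) · (c(l-j))_{(k)} equals Γ(m+c) / (Γ(1+c) · Γ(m)), where Γ denotes the Gamma function. -/
open Finset Polynomial fwdDiff

private lemma fd_poly (P : ℝ[X]) :
    fwdDiff (1:ℝ) (fun x => P.eval x) = fun x => (P.comp (X + C 1) - P).eval x := by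
  funext x
  simp [fwdDiff, eval_comp]

private lemma fd_iter_zero (n : ℕ) (P : ℝ[X]) (h : P.degree < n) (x : ℝ) :
    (fwdDiff (1:ℝ))^[n] (fun y => P.eval y) x = 0 := by
  induction n generalizing P x with
  | zero =>
    have hP : P = 0 := by
      rw [← Polynomial.degree_eq_bot]
      exact Nat.WithBot.lt_zero_iff.mp (by exact_mod_cast h)
    simp [hP]
  | succ n ih =>
    rw [Function.iterate_succ_apply, fd_poly]
    by_cases hP : P = 0
    · have : P.comp (X + C 1) - P = 0 := by simp [hP]
      rw [this]
      exact ih 0 (by simp [Polynomial.degree_zero]) x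
    · have hq : natDegree (X + C (1:ℝ)) ≠ 0 := by
        rw [natDegree_X_add_C]; exact one_ne_zero
      have hlc : (P.comp (X + C 1)).leadingCoeff = P.leadingCoeff := by
        rw [leadingCoeff_comp hq, Monic.leadingCoeff (monic_X_add_C (1:ℝ)), one_pow, mul_one]
      have hQ0 : P.comp (X + C 1) ≠ 0 := fun h0 => hP (by
        have := hlc; rw [h0, leadingCoeff_zero] at this
        exact leadingCoeff_eq_zero.mp this.symm)
      have hnd : (P.comp (X + C 1)).natDegree = P.natDegree := by
        rw [natDegree_comp, natDegree_X_add_C, mul_one]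
      have hdeg : (P.comp (X + C 1)).degree = P.degree := by
        rw [degree_eq_natDegree hQ0, degree_eq_natDegree hP, hnd]
      have hlt : (P.comp (X + C 1) - P).degree < P.degree := by
        have := degree_sub_lt hdeg hQ0 hlc
        rwa [hdeg] at this
      apply ih
      · refine lt_of_lt_of_le hlt ?_
        rw [degree_eq_natDegree hP]
        have : P.natDegree < n + 1 := by
          have := h; rw [degree_eq_natDegree hP] at this
          exact_mod_cast this
        exact_mod_cast Nat.lt_succ_iff.mp this

private lemma alt_sum_eq_zero (n : ℕ) (P : ℝ[X]) (h : P.degree < n) :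
    ∑ i ∈ range (n + 1), (-1:ℝ)^i * (n.choose i) * P.eval (i:ℝ) = 0 := by
  have h0 := fwdDiff_iter_eq_sum_shift (1:ℝ) (fun y => P.eval y) n 0
  rw [fd_iter_zero n P h 0] at h0
  simp only [zero_add, nsmul_eq_mul, mul_one, zsmul_eq_mul, Int.cast_mul, Int.cast_pow,
    Int.cast_neg, Int.cast_one, Int.cast_natCast] at h0
  have h1 : ∑ i ∈ range (n+1), (-1:ℝ)^i * (n.choose i) * P.eval (i:ℝ)
      = (-1:ℝ)^n * ∑ i ∈ range (n+1), (-1:ℝ)^(n-i) * (n.choose i) * P.eval (i:ℝ) := by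
    rw [mul_sum]
    apply sum_congr rfl
    intro i hi
    have hi' : i ≤ n := Finset.mem_range_succ_iff.mp hi
    have hab : (-1:ℝ)^(n-i) * (-1:ℝ)^i = (-1:ℝ)^n := by
      rw [← pow_add, Nat.sub_add_cancel hi']
    have ha : (-1:ℝ)^(n-i) * (-1:ℝ)^(n-i) = 1 := by
      rw [← pow_add]
      exact Even.neg_one_pow ⟨n-i, rfl⟩
    rw [← hab]
    linear_combination (-((-1:ℝ)^i * (n.choose i) * P.eval (i:ℝ))) * ha
  rw [h1, ← h0, mul_zero]

private lemma desc_eval_neg (k : ℕ) (c : ℝ) :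
    (descPochhammer ℝ k).eval (-c) = (-1:ℝ)^k * (ascPochhammer ℝ k).eval c := by
  induction k with
  | zero => simp
  | succ k ih =>
    rw [descPochhammer_succ_eval, ascPochhammer_succ_eval, ih]
    ring

private lemma tri1 (n : ℕ) (F : ℕ → ℕ → ℝ) :
    ∑ l ∈ range n, ∑ j ∈ range (l+1), F l j = ∑ j ∈ range n, ∑ l ∈ Ico j n, F l j := by
  rw [Finset.sum_sigma', Finset.sum_sigma']
  refine Finset.sum_nbij' (fun p => ⟨p.2, p.1⟩) (fun p => ⟨p.2, p.1⟩) ?_ ?_ ?_ ?_ ?_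
  · intro p hp; simp only [Finset.mem_sigma, Finset.mem_range, Finset.mem_Ico] at hp ⊢; omega
  · intro p hp; simp only [Finset.mem_sigma, Finset.mem_range, Finset.mem_Ico] at hp ⊢; omega
  · intro p _; rfl
  · intro p _; rfl
  · intro p _; rfl

private lemma tri2 (n : ℕ) (F : ℕ → ℕ → ℝ) :
    ∑ j ∈ range n, ∑ i ∈ range (n - j), F j i = ∑ i ∈ range n, ∑ j ∈ range (n - i), F j i := by
  rw [Finset.sum_sigma', Finset.sum_sigma']
  refine Finset.sum_nbij' (fun p => ⟨p.2, p.1⟩) (fun p => ⟨p.2, p.1⟩) ?_ ?_ ?_ ?_ ?_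
  · intro p hp; simp only [Finset.mem_sigma, Finset.mem_range] at hp ⊢; omega
  · intro p hp; simp only [Finset.mem_sigma, Finset.mem_range] at hp ⊢; omega
  · intro p _; rfl
  · intro p _; rfl
  · intro p _; rfl

private lemma key (k : ℕ) (c : ℝ) :
    ∑ l ∈ range (k+1), ∑ j ∈ range (l+1),
      (-1:ℝ)^(k+l+j) * (l.choose j : ℝ) * (descPochhammer ℝ k).eval (c * ((l:ℝ) - (j:ℝ)))
    = (ascPochhammer ℝ k).eval c := by
  set g : ℕ → ℝ := fun i => (descPochhammer ℝ k).eval (c * i) with hg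
  have step0 : ∑ l ∈ range (k+1), ∑ j ∈ range (l+1),
      (-1:ℝ)^(k+l+j) * (l.choose j : ℝ) * (descPochhammer ℝ k).eval (c * ((l:ℝ) - (j:ℝ)))
      = ∑ i ∈ range (k+1), (-1:ℝ)^(k+i) * ((k+1).choose (i+1) : ℝ) * g i := by
    rw [tri1]
    have swap1 : ∀ j ∈ range (k+1),
        ∑ l ∈ Ico j (k+1), (-1:ℝ)^(k+l+j) * (l.choose j : ℝ)
            * (descPochhammer ℝ k).eval (c * ((l:ℝ) - (j:ℝ)))
        = ∑ i ∈ range (k+1-j), (-1:ℝ)^(k+i) * ((j+i).choose j : ℝ) * g i := by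
      intro j hj
      rw [Finset.sum_Ico_eq_sum_range]
      apply sum_congr rfl
      intro i hi
      have hcast : ((j+i : ℕ) : ℝ) - (j : ℝ) = (i : ℝ) := by push_cast; ring
      rw [hcast]
      have hpow : (-1:ℝ)^(k+(j+i)+j) = (-1:ℝ)^(k+i) := by
        rw [show k+(j+i)+j = (k+i)+2*j by ring, pow_add, pow_mul]
        simp
      rw [hpow]
    rw [sum_congr rfl swap1, tri2]
    apply sum_congr rfl
    intro i hi
    have hik : i ≤ k := Finset.mem_range_succ_iff.mp hi
    have hsum : ∑ j ∈ range (k+1-i), ((j+i).choose j : ℝ) = ((k+1).choose (i+1) : ℝ) := by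
      have : ∑ j ∈ range (k+1-i), (j+i).choose j = (k+1).choose (i+1) := by
        have hrw : ∀ j, (j+i).choose j = (j+i).choose i := by
          intro j
          rw [← Nat.choose_symm (Nat.le_add_left i j), Nat.add_sub_cancel]
        calc ∑ j ∈ range (k+1-i), (j+i).choose j
            = ∑ j ∈ range ((k-i)+1), (j+i).choose i := by
              rw [show k+1-i = (k-i)+1 by omega]
              exact sum_congr rfl fun j _ => hrw j
          _ = (k-i+i+1).choose (i+1) := Nat.sum_range_add_choose (k-i) i
          _ = (k+1).choose (i+1) := by rw [show k-i+i = k by omega]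
      exact_mod_cast congrArg (Nat.cast : ℕ → ℝ) this
    calc ∑ j ∈ range (k+1-i), (-1:ℝ)^(k+i) * ((j+i).choose j : ℝ) * g i
        = (-1:ℝ)^(k+i) * g i * ∑ j ∈ range (k+1-i), ((j+i).choose j : ℝ) := by
          rw [mul_sum]; exact sum_congr rfl fun j _ => by ring
      _ = (-1:ℝ)^(k+i) * ((k+1).choose (i+1) : ℝ) * g i := by rw [hsum]; ring
  rw [step0]
  -- finite difference argument
  set P : ℝ[X] := (descPochhammer ℝ k).comp (C c * X - C c) with hP
  have hPdeg : P.degree < ((k+1 : ℕ) : WithBot ℕ) := by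
    have h1 : P.natDegree ≤ k := by
      refine le_trans (natDegree_comp_le) ?_
      have h2 : (C c * X - C c).natDegree ≤ 1 := by
        refine le_trans (natDegree_sub_le _ _) ?_
        simp [natDegree_C]
        exact le_trans (natDegree_C_mul_le c X) (by simp)
      calc (descPochhammer ℝ k).natDegree * (C c * X - C c).natDegree
          ≤ (descPochhammer ℝ k).natDegree * 1 := Nat.mul_le_mul_left _ h2
        _ = k := by rw [mul_one, descPochhammer_natDegree]
    refine lt_of_le_of_lt (degree_le_natDegree) ?_
    exact_mod_cast Nat.lt_succ_of_le h1
  have hPeval : ∀ x : ℝ, P.eval x = (descPochhammer ℝ k).eval (c * x - c) := by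
    intro x
    simp [hP, eval_comp]
  have h0 := alt_sum_eq_zero (k+1) P hPdeg
  rw [Finset.sum_range_succ'] at h0
  have hterm : ∀ i ∈ range (k+1),
      (-1:ℝ)^(i+1) * ((k+1).choose (i+1) : ℝ) * P.eval ((i+1 : ℕ) : ℝ)
      = -((-1:ℝ)^i * ((k+1).choose (i+1) : ℝ) * g i) := by
    intro i hi
    rw [hPeval]
    have : c * ((i+1 : ℕ) : ℝ) - c = c * i := by push_cast; ring
    rw [this, pow_succ]
    simp only [hg]
    ring
  rw [sum_congr rfl hterm] at h0
  rw [Finset.sum_neg_distrib] at h0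
  have h00 : P.eval ((0:ℕ) : ℝ) = (-1:ℝ)^k * (ascPochhammer ℝ k).eval c := by
    rw [hPeval]
    rw [show c * ((0:ℕ):ℝ) - c = -c by push_cast; ring]
    exact desc_eval_neg k c
  rw [h00] at h0
  simp only [pow_zero, Nat.choose_zero_right, Nat.cast_one, one_mul] at h0
  have h2 : ∑ i ∈ range (k+1), (-1:ℝ)^i * ((k+1).choose (i+1) : ℝ) * g i
      = (-1:ℝ)^k * (ascPochhammer ℝ k).eval c := by linarith
  calc ∑ i ∈ range (k+1), (-1:ℝ)^(k+i) * ((k+1).choose (i+1) : ℝ) * g i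
      = (-1:ℝ)^k * ∑ i ∈ range (k+1), (-1:ℝ)^i * ((k+1).choose (i+1) : ℝ) * g i := by
        rw [mul_sum]
        exact sum_congr rfl fun i _ => by rw [pow_add]; ring
    _ = (-1:ℝ)^k * ((-1:ℝ)^k * (ascPochhammer ℝ k).eval c) := by rw [h2]
    _ = (ascPochhammer ℝ k).eval c := by
        rw [← mul_assoc, ← pow_add]
        rw [Even.neg_one_pow ⟨k, rfl⟩, one_mul]

private lemma asc_succ_left_eval (n : ℕ) (c : ℝ) :
    (ascPochhammer ℝ (n+1)).eval c = c * (ascPochhammer ℝ n).eval (c+1) := by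
  rw [ascPochhammer_succ_left]
  simp [eval_comp]

private lemma sum_asc (c : ℝ) (n : ℕ) :
    ∑ k ∈ range (n+1), (1 / (k.factorial : ℝ)) * (ascPochhammer ℝ k).eval c
      = (ascPochhammer ℝ n).eval (c+1) / n.factorial := by
  induction n with
  | zero => simp
  | succ n ih =>
    rw [Finset.sum_range_succ, ih, asc_succ_left_eval, ascPochhammer_succ_eval]
    have hf : (n.factorial : ℝ) ≠ 0 := Nat.cast_ne_zero.mpr n.factorial_ne_zero
    have hf1 : ((n+1).factorial : ℝ) = ((n:ℝ)+1) * n.factorial := by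
      rw [Nat.factorial_succ]; push_cast; ring
    rw [hf1]
    have hn1 : ((n:ℝ)+1) ≠ 0 := by positivity
    field_simp
    ring

private lemma gamma_add_nat (c : ℝ) (hc : 0 < c) (k : ℕ) :
    Real.Gamma (c + k) = (ascPochhammer ℝ k).eval c * Real.Gamma c := by
  induction k with
  | zero => simp
  | succ k ih =>
    have h1 : c + ((k+1 : ℕ) : ℝ) = (c + k) + 1 := by push_cast; ring
    rw [h1, Real.Gamma_add_one (by positivity), ih, ascPochhammer_succ_eval]
    ring

/-- For every positive integer `m` and real `c` with `0 < c < 1`,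
`Σ_{k=0}^{m-1} (1/k!) Σ_{l=0}^{k} Σ_{j=0}^{l} (-1)^{k+l+j} C(l,j) (c(l-j))_{(k)}
  = Γ(m+c) / (Γ(1+c) Γ(m))`. -/
theorem stmt_0 (m : ℕ) (hm : 0 < m) (c : ℝ) (hc0 : 0 < c) (hc1 : c < 1) :
    ∑ k ∈ Finset.range m, (1 / (k.factorial : ℝ)) *
      ∑ l ∈ Finset.range (k + 1), ∑ j ∈ Finset.range (l + 1),
        (-1 : ℝ) ^ (k + l + j) * (l.choose j : ℝ) *
          (descPochhammer ℝ k).eval (c * ((l : ℝ) - (j : ℝ)))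
    = Real.Gamma ((m : ℝ) + c) / (Real.Gamma (1 + c) * Real.Gamma (m : ℝ)) := by
  obtain ⟨n, rfl⟩ : ∃ n, m = n + 1 := ⟨m - 1, (Nat.succ_pred_eq_of_pos hm).symm⟩
  have hL : ∑ k ∈ Finset.range (n+1), (1 / (k.factorial : ℝ)) *
      ∑ l ∈ Finset.range (k + 1), ∑ j ∈ Finset.range (l + 1),
        (-1 : ℝ) ^ (k + l + j) * (l.choose j : ℝ) *
          (descPochhammer ℝ k).eval (c * ((l : ℝ) - (j : ℝ)))
      = (ascPochhammer ℝ n).eval (c+1) / n.factorial := by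
    rw [← sum_asc c n]
    exact sum_congr rfl fun k _ => by rw [key k c]
  rw [hL]
  have hG : Real.Gamma c ≠ 0 := (Real.Gamma_pos_of_pos hc0).ne'
  have hc : c ≠ 0 := hc0.ne'
  have hf : (n.factorial : ℝ) ≠ 0 := Nat.cast_ne_zero.mpr n.factorial_ne_zero
  have h1 : Real.Gamma (((n+1 : ℕ) : ℝ) + c) = c * (ascPochhammer ℝ n).eval (c+1) * Real.Gamma c := by
    rw [show ((n+1 : ℕ) : ℝ) + c = c + ((n+1 : ℕ) : ℝ) by ring, gamma_add_nat c hc0,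
      asc_succ_left_eval]
    try ring
  have h2 : Real.Gamma (1 + c) = c * Real.Gamma c := by
    rw [show (1:ℝ) + c = c + 1 by ring, Real.Gamma_add_one hc]
  have h3 : Real.Gamma (((n+1 : ℕ) : ℝ)) = n.factorial := by
    rw [show ((n+1 : ℕ) : ℝ) = (n : ℝ) + 1 by push_cast; ring]
    exact Real.Gamma_nat_eq_factorial n
  rw [h1, h2, h3]
  field_simp
end

section
/- Let α > 2 and δ > 0 be real numbers, and define u(x) = (α/2)·(x/δ) - (1 + x/δ)·ln(1 + x/δ) for x > 0. Then there exists a unique x* > 0 with u(x*) = 0; moreover u(x) > 0 for all 0 < x < x* and u(x) < 0 for all x > x*. -/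
/-!
With `t = x / δ` and `c = α / 2` we have `u = t * (c - ψ t)`, where
`ψ t = (1 + t) log (1 + t) / t` is the slope of the secant of `s ↦ s log s` between `1` and `1 + t`.
Strict convexity of `s log s` makes `ψ` strictly increasing on `t > 0`, and
`ψ (exp (c - 1) - 1) < c < ψ (exp c - 1)`, so `ψ` crosses the level `c` exactly once, at some `t₀`,
and `x* = δ t₀`.
-/

open Real Set

noncomputable def mulLogSlope (t : ℝ) : ℝ := (1 + t) * log (1 + t) / t

lemma strictMonoOn_mulLogSlope : StrictMonoOn mulLogSlope (Ioi 0) := by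
  intro t (ht : 0 < t) t' (ht' : 0 < t') htt'
  have key := strictConvexOn_mul_log.secant_strict_mono (a := 1) (x := 1 + t) (y := 1 + t')
    (mem_Ici.2 zero_le_one) (by rw [mem_Ici]; linarith) (by rw [mem_Ici]; linarith) (by linarith)
    (by linarith) (by linarith)
  simpa [mulLogSlope] using key

lemma continuousOn_mulLogSlope : ContinuousOn mulLogSlope (Ioi 0) := by
  intro t (ht : 0 < t)
  have : 1 + t ≠ 0 := by linarith
  unfold mulLogSlope
  exact ContinuousAt.continuousWithinAt (by fun_prop (disch := positivity))

lemma mulLogSlope_exp_sub_one (c : ℝ) :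
    mulLogSlope (exp c - 1) = c * exp c / (exp c - 1) := by
  simp [mulLogSlope, mul_comm]

lemma mulLogSlope_exp_sub_one_lt {c : ℝ} (hc : 1 < c) : mulLogSlope (exp (c - 1) - 1) < c := by
  have hpos : 0 < exp (c - 1) - 1 := by linarith [add_one_lt_exp (x := c - 1) (by linarith)]
  rw [mulLogSlope_exp_sub_one, div_lt_iff₀ hpos]
  nlinarith [add_one_lt_exp (x := c - 1) (by linarith)]

lemma lt_mulLogSlope_exp_sub_one {c : ℝ} (hc : 0 < c) : c < mulLogSlope (exp c - 1) := by
  have hpos : 0 < exp c - 1 := by linarith [add_one_lt_exp hc.ne']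
  rw [mulLogSlope_exp_sub_one, lt_div_iff₀ hpos]
  linarith

lemma exists_mulLogSlope_eq {c : ℝ} (hc : 1 < c) : ∃ t ∈ Ioi (0 : ℝ), mulLogSlope t = c := by
  have ha : 0 < exp (c - 1) - 1 := by linarith [add_one_lt_exp (x := c - 1) (by linarith)]
  have hab : exp (c - 1) - 1 ≤ exp c - 1 := by gcongr; linarith
  obtain ⟨t, ht, htc⟩ := intermediate_value_Icc hab
    (continuousOn_mulLogSlope.mono fun t ht => ha.trans_le ht.1)
    ⟨(mulLogSlope_exp_sub_one_lt hc).le, (lt_mulLogSlope_exp_sub_one (by linarith)).le⟩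
  exact ⟨t, ha.trans_le ht.1, htc⟩

lemma mul_sub_mul_log_eq_mul_sub_mulLogSlope {c t : ℝ} (ht : t ≠ 0) :
    c * t - (1 + t) * log (1 + t) = t * (c - mulLogSlope t) := by
  rw [mulLogSlope]; field_simp

/-- For `α > 2`, `δ > 0` and `u(x) = (α/2)(x/δ) - (1+x/δ)ln(1+x/δ)`,
there is a unique `x* > 0` with `u(x*) = 0`; moreover `u > 0` on `(0, x*)`
and `u < 0` on `(x*, ∞)`. -/
theorem stmt_4 (α δ : ℝ) (hα : 2 < α) (hδ : 0 < δ) :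
    ∃ x0 : ℝ, 0 < x0 ∧
      (α / 2) * (x0 / δ) - (1 + x0 / δ) * Real.log (1 + x0 / δ) = 0 ∧
      (∀ x : ℝ, 0 < x →
        (α / 2) * (x / δ) - (1 + x / δ) * Real.log (1 + x / δ) = 0 → x = x0) ∧
      (∀ x : ℝ, 0 < x → x < x0 →
        0 < (α / 2) * (x / δ) - (1 + x / δ) * Real.log (1 + x / δ)) ∧
      (∀ x : ℝ, x0 < x →
        (α / 2) * (x / δ) - (1 + x / δ) * Real.log (1 + x / δ) < 0) := by
  obtain ⟨t₀, ht₀ : 0 < t₀, hslope⟩ := exists_mulLogSlope_eq (c := α / 2) (by linarith)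
  have hu : ∀ x, 0 < x → (α / 2) * (x / δ) - (1 + x / δ) * log (1 + x / δ) =
      x / δ * (mulLogSlope t₀ - mulLogSlope (x / δ)) := fun x hx => by
    rw [hslope, mul_sub_mul_log_eq_mul_sub_mulLogSlope (div_pos hx hδ).ne']
  refine ⟨δ * t₀, by positivity, ?_, fun x hx hux => ?_, fun x hx hxt => ?_, fun x hxt => ?_⟩
  · rw [hu _ (by positivity), mul_div_cancel_left₀ _ hδ.ne', sub_self, mul_zero]
  · rw [hu x hx, mul_eq_zero, sub_eq_zero] at hux
    have hxt := strictMonoOn_mulLogSlope.injOn (div_pos hx hδ) ht₀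
      ((hux.resolve_left (div_pos hx hδ).ne').symm)
    rw [← hxt, mul_div_cancel₀ _ hδ.ne']
  · rw [hu x hx]
    exact mul_pos (div_pos hx hδ)
      (sub_pos.2 (strictMonoOn_mulLogSlope (div_pos hx hδ) ht₀ (by rwa [div_lt_iff₀ hδ, mul_comm])))
  · have hx : 0 < x := lt_trans (by positivity) hxt
    rw [hu x hx]
    exact mul_neg_of_pos_of_neg (div_pos hx hδ)
      (sub_neg.2 (strictMonoOn_mulLogSlope ht₀ (div_pos hx hδ) (by rwa [lt_div_iff₀ hδ, mul_comm])))
end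

section
/- Let α > 2 and δ > 0 be real numbers, define u(x) = (α/2)·(x/δ) - (1 + x/δ)·ln(1 + x/δ), and let x* > 0 be the unique positive zero of u. Then the function f(x) = x^{-2/α} · ln(1 + x/δ) is strictly increasing on (0, x*] and strictly decreasing on [x*, ∞); in particular f attains its unique global maximum on (0, ∞) at x = x*. -/
/-! Up to the positive factor `(2/α) x^(-2/α-1) / (1 + x/δ)`, the derivative of `f` is
`u(x) = g(x/δ)` with `g(t) = (α/2) t - (1 + t) log (1 + t)`. Since `t ↦ (1 + t) log (1 + t)` is
strictly convex, `g` is strictly concave, and it vanishes at `0` and at `x*/δ`; hence `g` is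
positive between these zeros and negative beyond `x*/δ`, which gives the monotonicity of `f`. -/

open Real Set

section

variable {𝕜 E : Type*} [Field 𝕜] [LinearOrder 𝕜] [IsStrictOrderedRing 𝕜] [AddCommGroup E]
  [Module 𝕜 E] {s : Set E} {g : E → 𝕜} {a b x : E}

theorem StrictConcaveOn.pos_of_mem_openSegment (hg : StrictConcaveOn 𝕜 s g) (ha : a ∈ s)
    (hb : b ∈ s) (hab : a ≠ b) (hga : g a = 0) (hgb : g b = 0) (hx : x ∈ openSegment 𝕜 a b) :
    0 < g x := by
  simpa [hga, hgb] using hg.lt_on_openSegment ha hb hab hx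

theorem StrictConcaveOn.neg_of_mem_openSegment (hg : StrictConcaveOn 𝕜 s g) (ha : a ∈ s)
    (hx : x ∈ s) (hax : a ≠ x) (hga : g a = 0) (hgb : g b = 0) (hb : b ∈ openSegment 𝕜 a x) :
    g x < 0 := by
  simpa [hga, hgb] using hg.lt_on_openSegment ha hx hax hb

end

theorem strictConcaveOn_mul_sub_one_add_mul_log_one_add (c : ℝ) :
    StrictConcaveOn ℝ (Ici (-1)) (fun t => c * t - (1 + t) * log (1 + t)) := by
  have hlin : ConcaveOn ℝ (Ici (-1)) (fun t : ℝ => c * t) :=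
    (LinearMap.mul ℝ ℝ c).concaveOn (convex_Ici _)
  have hent := strictConcaveOn_negMulLog.translate_right (1 : ℝ)
  rw [preimage_const_add_Ici, zero_sub] at hent
  refine (hlin.add_strictConcaveOn hent).congr fun t _ => ?_
  simp only [Pi.add_apply, Function.comp_apply, negMulLog]
  ring

theorem mul_sub_one_add_mul_log_one_add_pos {c s t : ℝ}
    (hs : c * s - (1 + s) * log (1 + s) = 0) (ht : t ∈ Ioo 0 s) :
    0 < c * t - (1 + t) * log (1 + t) :=
  (strictConcaveOn_mul_sub_one_add_mul_log_one_add c).pos_of_mem_openSegment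
    (by norm_num) (by simp only [mem_Ici]; linarith [ht.1, ht.2]) (by linarith [ht.1, ht.2])
    (by simp) hs (Ioo_subset_openSegment ht)

theorem mul_sub_one_add_mul_log_one_add_neg {c s t : ℝ} (hs₀ : 0 < s)
    (hs : c * s - (1 + s) * log (1 + s) = 0) (hst : s < t) :
    c * t - (1 + t) * log (1 + t) < 0 :=
  (strictConcaveOn_mul_sub_one_add_mul_log_one_add c).neg_of_mem_openSegment
    (by norm_num) (by simp only [mem_Ici]; linarith) (by linarith)
    (by simp) hs (Ioo_subset_openSegment ⟨hs₀, hst⟩)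

theorem hasDerivAt_rpow_neg_mul_log_one_add_div {p δ x : ℝ} (hp : p ≠ 0) (hδ : 0 < δ)
    (hx : 0 < x) :
    HasDerivAt (fun x => x ^ (-p) * log (1 + x / δ))
      (p * x ^ (-p - 1) / (1 + x / δ) * (p⁻¹ * (x / δ) - (1 + x / δ) * log (1 + x / δ))) x := by
  have hy : 0 < 1 + x / δ := by positivity
  have hlog := (((hasDerivAt_id x).div_const δ).const_add 1).log hy.ne'
  refine ((hasDerivAt_rpow_const (Or.inl hx.ne')).mul hlog).congr_deriv ?_
  rw [show x ^ (-p) = x ^ (-p - 1) * x by rw [← rpow_add_one hx.ne']; ring_nf]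
  simp only [id]
  field_simp
  ring

section

variable {p δ s : ℝ}

theorem strictMonoOn_rpow_neg_mul_log_one_add_div (hp : 0 < p) (hδ : 0 < δ)
    (hs : p⁻¹ * (s / δ) - (1 + s / δ) * log (1 + s / δ) = 0) :
    StrictMonoOn (fun x : ℝ => x ^ (-p) * log (1 + x / δ)) (Ioc 0 s) := by
  have hf' (x : ℝ) (hx : 0 < x) := hasDerivAt_rpow_neg_mul_log_one_add_div hp.ne' hδ hx
  refine strictMonoOn_of_hasDerivWithinAt_pos (convex_Ioc 0 s)
    (fun x hx => (hf' x hx.1).continuousAt.continuousWithinAt)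
    (fun x hx => (hf' x (interior_subset hx).1).hasDerivWithinAt) fun x hx => ?_
  rw [interior_Ioc] at hx
  have hx₀ : 0 < x := hx.1
  exact mul_pos (by positivity) (mul_sub_one_add_mul_log_one_add_pos hs
    ⟨div_pos hx₀ hδ, div_lt_div_of_pos_right hx.2 hδ⟩)

theorem strictAntiOn_rpow_neg_mul_log_one_add_div (hp : 0 < p) (hδ : 0 < δ) (hs₀ : 0 < s)
    (hs : p⁻¹ * (s / δ) - (1 + s / δ) * log (1 + s / δ) = 0) :
    StrictAntiOn (fun x : ℝ => x ^ (-p) * log (1 + x / δ)) (Ici s) := by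
  have hf' (x : ℝ) (hx : s ≤ x) :=
    hasDerivAt_rpow_neg_mul_log_one_add_div hp.ne' hδ (hs₀.trans_le hx)
  refine strictAntiOn_of_hasDerivWithinAt_neg (convex_Ici s)
    (fun x hx => (hf' x hx).continuousAt.continuousWithinAt)
    (fun x hx => (hf' x (interior_subset hx)).hasDerivWithinAt) fun x hx => ?_
  rw [interior_Ici] at hx
  have hx₀ : 0 < x := hs₀.trans hx
  exact mul_neg_of_pos_of_neg (by positivity) (mul_sub_one_add_mul_log_one_add_neg
    (div_pos hs₀ hδ) hs (div_lt_div_of_pos_right hx hδ))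

end

theorem stmt_5_general (α δ xs : ℝ) (hα : 2 < α) (hδ : 0 < δ) (hxs : 0 < xs)
    (hzero : (α / 2) * (xs / δ) - (1 + xs / δ) * Real.log (1 + xs / δ) = 0) :
    StrictMonoOn (fun x : ℝ => x ^ (-(2 / α)) * Real.log (1 + x / δ)) (Set.Ioc 0 xs) ∧
    StrictAntiOn (fun x : ℝ => x ^ (-(2 / α)) * Real.log (1 + x / δ)) (Set.Ici xs) ∧
    ∀ x : ℝ, 0 < x → x ≠ xs →
      x ^ (-(2 / α)) * Real.log (1 + x / δ)
        < xs ^ (-(2 / α)) * Real.log (1 + xs / δ) := by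
  have hp : 0 < 2 / α := by positivity
  rw [← inv_div] at hzero
  have hmono := strictMonoOn_rpow_neg_mul_log_one_add_div hp hδ hzero
  have hanti := strictAntiOn_rpow_neg_mul_log_one_add_div hp hδ hxs hzero
  refine ⟨hmono, hanti, fun x hx hne => hne.lt_or_gt.elim (fun h => ?_) fun h => ?_⟩
  · exact hmono ⟨hx, h.le⟩ (right_mem_Ioc.2 hxs) h
  · exact hanti self_mem_Ici h.le h

/-- With `u` as in Proposition 2 and `x*` its unique positive zero,
`f(x) = x^{-2/α} ln(1 + x/δ)` is strictly increasing on `(0, x*]`, strictly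
decreasing on `[x*, ∞)`, and attains its unique global maximum on `(0, ∞)` at `x*`. -/
theorem stmt_5 (α δ xs : ℝ) (hα : 2 < α) (hδ : 0 < δ) (hxs : 0 < xs)
    (hzero : (α / 2) * (xs / δ) - (1 + xs / δ) * Real.log (1 + xs / δ) = 0)
    (huniq : ∀ x : ℝ, 0 < x →
      (α / 2) * (x / δ) - (1 + x / δ) * Real.log (1 + x / δ) = 0 → x = xs) :
    StrictMonoOn (fun x : ℝ => x ^ (-(2 / α)) * Real.log (1 + x / δ)) (Set.Ioc 0 xs) ∧
    StrictAntiOn (fun x : ℝ => x ^ (-(2 / α)) * Real.log (1 + x / δ)) (Set.Ici xs) ∧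
    ∀ x : ℝ, 0 < x → x ≠ xs →
      x ^ (-(2 / α)) * Real.log (1 + x / δ)
        < xs ^ (-(2 / α)) * Real.log (1 + xs / δ) :=
  stmt_5_general α δ xs hα hδ hxs hzero
end

section
/- Let δ > 0 and let 2 < α₁ < α₂ be real numbers. For i = 1, 2 let x*ᵢ > 0 be the unique positive zero of the function x ↦ (αᵢ/2)·(x/δ) - (1 + x/δ)·ln(1 + x/δ). Then x*₁ < x*₂. -/
open Real Set

/-- `(1 + t) log (1 + t) / t` is the slope of the strictly convex `x ↦ x log x` between `1` and
`1 + t`, hence strictly increasing. -/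
lemma strictMonoOn_one_add_mul_log_one_add_div :
    StrictMonoOn (fun t : ℝ => (1 + t) * log (1 + t) / t) (Ioi 0) := by
  intro s hs t ht hst
  have hs : (0 : ℝ) < s := hs
  have ht : (0 : ℝ) < t := ht
  have hslope := strictConvexOn_mul_log.secant_strict_mono (a := 1) (x := 1 + s) (y := 1 + t)
    (by simp) (by rw [mem_Ici]; linarith) (by rw [mem_Ici]; linarith)
    (by simpa using hs.ne') (by simpa using ht.ne')
    (by linarith)
  simpa using hslope

lemma one_add_mul_log_one_add_div_eq_of_eq_zero {α t : ℝ} (ht : 0 < t)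
    (h : α / 2 * t - (1 + t) * log (1 + t) = 0) : (1 + t) * log (1 + t) / t = α / 2 := by
  rw [div_eq_iff ht.ne']
  linarith

theorem stmt_6_general (δ α₁ α₂ x₁ x₂ : ℝ) (hδ : 0 < δ) (hα₁₂ : α₁ < α₂)
    (hx₁ : 0 < x₁) (hx₂ : 0 < x₂)
    (h₁ : (α₁ / 2) * (x₁ / δ) - (1 + x₁ / δ) * Real.log (1 + x₁ / δ) = 0)
    (h₂ : (α₂ / 2) * (x₂ / δ) - (1 + x₂ / δ) * Real.log (1 + x₂ / δ) = 0) :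
    x₁ < x₂ := by
  have ht₁ : 0 < x₁ / δ := div_pos hx₁ hδ
  have ht₂ : 0 < x₂ / δ := div_pos hx₂ hδ
  have hslope : (1 + x₁ / δ) * log (1 + x₁ / δ) / (x₁ / δ)
      < (1 + x₂ / δ) * log (1 + x₂ / δ) / (x₂ / δ) := by
    rw [one_add_mul_log_one_add_div_eq_of_eq_zero ht₁ h₁,
      one_add_mul_log_one_add_div_eq_of_eq_zero ht₂ h₂]
    linarith
  have hlt := (strictMonoOn_one_add_mul_log_one_add_div.lt_iff_lt ht₁ ht₂).mp hslope
  exact (div_lt_div_iff_of_pos_right hδ).mp hlt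

/-- For `δ > 0` and `2 < α₁ < α₂`, the unique positive zeros `x*₁`,
`x*₂` of `x ↦ (αᵢ/2)(x/δ) - (1+x/δ)ln(1+x/δ)` satisfy `x*₁ < x*₂`. -/
theorem stmt_6 (δ α₁ α₂ x₁ x₂ : ℝ) (hδ : 0 < δ) (hα₁ : 2 < α₁) (hα₁₂ : α₁ < α₂)
    (hx₁ : 0 < x₁) (hx₂ : 0 < x₂)
    (h₁ : (α₁ / 2) * (x₁ / δ) - (1 + x₁ / δ) * Real.log (1 + x₁ / δ) = 0)
    (h₁u : ∀ x : ℝ, 0 < x →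
      (α₁ / 2) * (x / δ) - (1 + x / δ) * Real.log (1 + x / δ) = 0 → x = x₁)
    (h₂ : (α₂ / 2) * (x₂ / δ) - (1 + x₂ / δ) * Real.log (1 + x₂ / δ) = 0)
    (h₂u : ∀ x : ℝ, 0 < x →
      (α₂ / 2) * (x / δ) - (1 + x / δ) * Real.log (1 + x / δ) = 0 → x = x₂) :
    x₁ < x₂ :=
  stmt_6_general δ α₁ α₂ x₁ x₂ hδ hα₁₂ hx₁ hx₂ h₁ h₂
end

section
/- For every δ > 0, the function v(x) = (1 + δ/x) · ln(1 + x/δ) is strictly increasing on (0, ∞). -/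
/-! With `u = 1 + x / δ`, the function is `u log u / (u - 1)`: the slope of the secant of the
strictly convex function `u ↦ u log u` between `1` and `u`, which increases strictly with `u`. -/

open Real

lemma one_add_div_mul_log_eq_secant {δ x : ℝ} (hδ : δ ≠ 0) (hx : x ≠ 0) :
    (1 + δ / x) * log (1 + x / δ) =
      ((1 + x / δ) * log (1 + x / δ) - 1 * log 1) / (1 + x / δ - 1) := by
  rw [log_one, mul_zero, sub_zero, add_sub_cancel_left]
  field_simp
  ring

/-- For every `δ > 0`, `v(x) = (1 + δ/x) ln(1 + x/δ)` is strictly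
increasing on `(0, ∞)`. -/
theorem stmt_7 (δ : ℝ) (hδ : 0 < δ) :
    StrictMonoOn (fun x : ℝ => (1 + δ / x) * Real.log (1 + x / δ)) (Set.Ioi 0) := by
  intro x (hx : 0 < x) y (hy : 0 < y) hxy
  simp only [one_add_div_mul_log_eq_secant hδ.ne' hx.ne',
    one_add_div_mul_log_eq_secant hδ.ne' hy.ne']
  have hxδ : 0 < x / δ := div_pos hx hδ
  have hyδ : 0 < y / δ := div_pos hy hδ
  refine strictConvexOn_mul_log.secant_strict_mono (Set.mem_Ici.2 zero_le_one)
    (Set.mem_Ici.2 (by positivity)) (Set.mem_Ici.2 (by positivity))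
    (by linarith) (by linarith) ?_
  gcongr
end

section
/- Let λ, ξ, σ, M be positive real numbers and let 0 < ρ < 1. Define d = λπ²ρ/(4Mσ), κ = λ²π⁴/(8M²σ²), and E = (λ·π^{3/2}·ρ(1-ρ)/(2·√(ξσ²))) · exp(d²) · (2/√π) · ∫_d^∞ exp(-t²) dt. Then (2/π)·(M(1-ρ)/√ξ)·(κρ²/(1+κρ²)) < E < (2/π)·(M(1-ρ)/√ξ). -/
/-!
With `κ ρ² = 2 d²` and `d = λ π² ρ / (4 M σ)`, the expression factors as
`E = (2 / π) (M (1 - ρ) / √ξ) · 2 d e^{d²} ∫_d^∞ e^{-t²} dt`, so the claim is the classical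
bound `2d² / (2d² + 1) < 2 d e^{d²} ∫_d^∞ e^{-t²} dt < 1` on the Mills ratio of the Gaussian.
Both sides come from comparing `e^{-t²}` on `(d, ∞)` with an explicit derivative vanishing at
infinity: `(t / d) e^{-t²}` (of `-e^{-t²} / (2d)`) from above and
`e^{-t²} (1 - 2 / (2t² + 1)²)` (of `-t e^{-t²} / (2t² + 1)`) from below.
-/

open MeasureTheory Set Filter Topology Real

lemma tendsto_exp_neg_sq_atTop : Tendsto (fun t : ℝ => exp (-t ^ 2)) atTop (𝓝 0) :=
  tendsto_exp_atBot.comp (tendsto_neg_atTop_atBot.comp (tendsto_pow_atTop two_ne_zero))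

lemma integrableOn_Ioi_exp_neg_sq (a : ℝ) : IntegrableOn (fun t : ℝ => exp (-t ^ 2)) (Ioi a) := by
  simpa using (integrable_exp_neg_mul_sq one_pos).integrableOn

lemma hasDerivAt_exp_neg_sq (t : ℝ) :
    HasDerivAt (fun t : ℝ => exp (-t ^ 2)) (-2 * t * exp (-t ^ 2)) t := by
  convert (hasDerivAt_pow 2 t).fun_neg.exp using 1
  push_cast
  ring

lemma setIntegral_lt_setIntegral_of_forall_lt {X : Type*} [MeasurableSpace X] {μ : Measure X}
    {s : Set X} {f g : X → ℝ} (hs : MeasurableSet s) (hμs : μ s ≠ 0) (hf : IntegrableOn f s μ)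
    (hg : IntegrableOn g s μ) (hlt : ∀ x ∈ s, f x < g x) :
    ∫ x in s, f x ∂μ < ∫ x in s, g x ∂μ := by
  rw [← sub_pos, ← integral_sub hg hf,
    setIntegral_pos_iff_support_of_nonneg_ae (f := fun x => g x - f x) _ (hg.sub hf)]
  · refine lt_of_lt_of_le ?_ (measure_mono fun x hx => ⟨(sub_pos.2 (hlt x hx)).ne', hx⟩)
    exact pos_iff_ne_zero.2 hμs
  · filter_upwards [ae_restrict_mem hs] with x hx using (sub_pos.2 (hlt x hx)).le

lemma integral_Ioi_exp_neg_sq_lt {d : ℝ} (hd : 0 < d) :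
    ∫ t in Ioi d, exp (-t ^ 2) < exp (-d ^ 2) / (2 * d) := by
  have hderiv : ∀ t ∈ Ici d,
      HasDerivAt (fun t => -exp (-t ^ 2) / (2 * d)) (t / d * exp (-t ^ 2)) t := by
    intro t _
    refine ((hasDerivAt_exp_neg_sq t).fun_neg.div_const (2 * d)).congr_deriv ?_
    field_simp
  have hnonneg : ∀ t ∈ Ioi d, 0 ≤ t / d * exp (-t ^ 2) := fun t ht =>
    mul_nonneg (div_nonneg (hd.trans ht).le hd.le) (exp_pos _).le
  have hlim : Tendsto (fun t => -exp (-t ^ 2) / (2 * d)) atTop (𝓝 0) := by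
    simpa using (tendsto_exp_neg_sq_atTop.neg).div_const (2 * d)
  calc ∫ t in Ioi d, exp (-t ^ 2)
      < ∫ t in Ioi d, t / d * exp (-t ^ 2) := by
        refine setIntegral_lt_setIntegral_of_forall_lt measurableSet_Ioi (by simp)
          (integrableOn_Ioi_exp_neg_sq d)
          (integrableOn_Ioi_deriv_of_nonneg' hderiv hnonneg hlim) fun t ht => ?_
        exact lt_mul_of_one_lt_left (exp_pos _) ((one_lt_div hd).2 ht)
    _ = exp (-d ^ 2) / (2 * d) := by
        rw [integral_Ioi_of_hasDerivAt_of_nonneg' hderiv hnonneg hlim]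
        ring

lemma lt_integral_Ioi_exp_neg_sq (d : ℝ) :
    d * exp (-d ^ 2) / (2 * d ^ 2 + 1) < ∫ t in Ioi d, exp (-t ^ 2) := by
  set c : ℝ → ℝ := fun t => 2 / (2 * t ^ 2 + 1) ^ 2
  have hq : ∀ t : ℝ, 0 < 2 * t ^ 2 + 1 := fun t => by positivity
  have hc : ∀ t, 0 < c t ∧ c t ≤ 2 := fun t => by
    refine ⟨by positivity, div_le_self zero_le_two ?_⟩
    nlinarith [sq_nonneg t]
  have hderiv : ∀ t ∈ Ici d, HasDerivAt (fun t => -(t * exp (-t ^ 2) / (2 * t ^ 2 + 1)))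
      (exp (-t ^ 2) * (1 - c t)) t := by
    intro t _
    have hden : HasDerivAt (fun t : ℝ => 2 * t ^ 2 + 1) (4 * t) t := by
      refine (((hasDerivAt_pow 2 t).const_mul 2).add_const 1).congr_deriv ?_
      push_cast
      ring
    refine (((hasDerivAt_id' t).fun_mul (hasDerivAt_exp_neg_sq t)).fun_div hden
      (hq t).ne').fun_neg.congr_deriv ?_
    simp only [c]
    field_simp
    ring
  have hint : IntegrableOn (fun t => exp (-t ^ 2) * (1 - c t)) (Ioi d) := by
    refine (integrableOn_Ioi_exp_neg_sq d).mono' (by fun_prop) (ae_of_all _ fun t => ?_)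
    rw [norm_mul, Real.norm_of_nonneg (exp_pos _).le]
    refine mul_le_of_le_one_right (exp_pos _).le (abs_le.2 ⟨?_, ?_⟩) <;> linarith [hc t]
  have hlim : Tendsto (fun t => -(t * exp (-t ^ 2) / (2 * t ^ 2 + 1))) atTop (𝓝 0) := by
    refine squeeze_zero_norm' ?_ tendsto_exp_neg_sq_atTop
    filter_upwards [eventually_ge_atTop 0] with t ht
    rw [norm_neg, Real.norm_of_nonneg (by positivity), div_le_iff₀ (hq t)]
    nlinarith [exp_pos (-t ^ 2), sq_nonneg (t - 1)]
  calc d * exp (-d ^ 2) / (2 * d ^ 2 + 1)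
      = ∫ t in Ioi d, exp (-t ^ 2) * (1 - c t) := by
        rw [integral_Ioi_of_hasDerivAt_of_tendsto' hderiv hint hlim]
        ring
    _ < ∫ t in Ioi d, exp (-t ^ 2) :=
        setIntegral_lt_setIntegral_of_forall_lt measurableSet_Ioi (by simp) hint
          (integrableOn_Ioi_exp_neg_sq d) fun t _ =>
          mul_lt_of_lt_one_right (exp_pos _) (by linarith [hc t])

lemma mills_ratio_bounds {d : ℝ} (hd : 0 < d) :
    2 * d ^ 2 / (2 * d ^ 2 + 1) < 2 * d * exp (d ^ 2) * ∫ t in Ioi d, exp (-t ^ 2) ∧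
      2 * d * exp (d ^ 2) * ∫ t in Ioi d, exp (-t ^ 2) < 1 := by
  have hscale : 0 < 2 * d * exp (d ^ 2) := by positivity
  constructor
  · calc 2 * d ^ 2 / (2 * d ^ 2 + 1)
        = 2 * d * exp (d ^ 2) * (d * exp (-d ^ 2) / (2 * d ^ 2 + 1)) := by
          rw [exp_neg]
          field_simp
      _ < _ := mul_lt_mul_of_pos_left (lt_integral_Ioi_exp_neg_sq d) hscale
  · calc 2 * d * exp (d ^ 2) * ∫ t in Ioi d, exp (-t ^ 2)
        < 2 * d * exp (d ^ 2) * (exp (-d ^ 2) / (2 * d)) :=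
          mul_lt_mul_of_pos_left (integral_Ioi_exp_neg_sq_lt hd) hscale
      _ = 1 := by
          rw [exp_neg]
          field_simp

/-- The two-sided bound (equation (9) of the paper) on the
closed-form expression `E` of Proposition 3 for the average number of discovered
peers under Rayleigh fading with `α = 4` and nonzero noise. -/
theorem stmt_11 (lam ξ σ M ρ d κ E : ℝ)
    (hlam : 0 < lam) (hξ : 0 < ξ) (hσ : 0 < σ) (hM : 0 < M)
    (hρ0 : 0 < ρ) (hρ1 : ρ < 1)
    (hd : d = lam * Real.pi ^ 2 * ρ / (4 * M * σ))
    (hκ : κ = lam ^ 2 * Real.pi ^ 4 / (8 * M ^ 2 * σ ^ 2))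
    (hE : E = (lam * Real.pi ^ ((3 : ℝ) / 2) * ρ * (1 - ρ)
          / (2 * Real.sqrt (ξ * σ ^ 2))) * Real.exp (d ^ 2) *
        ((2 / Real.sqrt Real.pi) * ∫ t in Set.Ioi d, Real.exp (-t ^ 2))) :
    (2 / Real.pi) * (M * (1 - ρ) / Real.sqrt ξ) * (κ * ρ ^ 2 / (1 + κ * ρ ^ 2)) < E ∧
    E < (2 / Real.pi) * (M * (1 - ρ) / Real.sqrt ξ) := by
  have hd0 : 0 < d := by rw [hd]; positivity
  have hA : 0 < 2 / π * (M * (1 - ρ) / √ξ) := by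
    have h1ρ : 0 < 1 - ρ := sub_pos.2 hρ1
    have hsξ : 0 < √ξ := sqrt_pos.2 hξ
    positivity
  have hEX : E = 2 / π * (M * (1 - ρ) / √ξ) *
      (2 * d * exp (d ^ 2) * ∫ t in Ioi d, exp (-t ^ 2)) := by
    have hπ32 : π ^ ((3 : ℝ) / 2) = π * √π := by
      rw [show (3 : ℝ) / 2 = 1 + 1 / 2 by norm_num, rpow_add pi_pos, rpow_one, sqrt_eq_rpow]
    have hd' : lam * π ^ 2 * ρ = 4 * M * σ * d := by rw [hd]; field_simp
    rw [hE, hπ32, sqrt_mul hξ.le, sqrt_sq hσ.le]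
    have hsξ : 0 < √ξ := sqrt_pos.2 hξ
    have hsπ : 0 < √π := sqrt_pos.2 pi_pos
    field_simp
    rw [hd']
    ring
  have hκd : κ * ρ ^ 2 = 2 * d ^ 2 := by
    rw [hκ, hd]
    field_simp
    ring
  obtain ⟨hlo, hup⟩ := mills_ratio_bounds hd0
  rw [hEX, hκd, add_comm 1]
  exact ⟨mul_lt_mul_of_pos_left hlo hA, mul_lt_of_lt_one_right hA hup⟩
end

section
/- Let κ > 0 and let x̂ ∈ (0, 1) be the unique root in (0,1) of u(x) = -κx³ - 3x + 2. Then the function f(x) = x²(1-x)/(1 + κx²) is strictly increasing on (0, x̂] and strictly decreasing on [x̂, 1); in particular f attains its unique maximum on (0, 1) at x = x̂. -/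
/-!
`f'(x) = x u(x) / (1 + κx²)²`, and for `κ ≥ 0` the cubic `u` is strictly decreasing on `[0, ∞)`.
Hence `f' > 0` on `(0, x̂)` and `f' < 0` on `(x̂, ∞)`, which gives both monotonicity claims and
the strict maximum at `x̂`.
-/

open Set

/-- The paper's `f(ρ)`, proportional to the lower bound on the number of discovered peers. -/
noncomputable def discoveryBound (κ x : ℝ) : ℝ := x ^ 2 * (1 - x) / (1 + κ * x ^ 2)

/-- The paper's `u(x)`. -/
def discoveryCubic (κ x : ℝ) : ℝ := -κ * x ^ 3 - 3 * x + 2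

section

variable {κ : ℝ}

theorem hasDerivAt_discoveryBound (hκ : 0 ≤ κ) (x : ℝ) :
    HasDerivAt (discoveryBound κ)
      (x * discoveryCubic κ x / (1 + κ * x ^ 2) ^ 2) x := by
  have hden : 1 + κ * x ^ 2 ≠ 0 := by positivity
  have hnum : HasDerivAt (fun x : ℝ => x ^ 2 * (1 - x)) (2 * x - 3 * x ^ 2) x :=
    ((hasDerivAt_pow 2 x).mul ((hasDerivAt_const x 1).sub (hasDerivAt_id x))).congr_deriv
      (by simp; ring)
  have hden' : HasDerivAt (fun x : ℝ => 1 + κ * x ^ 2) (2 * κ * x) x :=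
    ((hasDerivAt_pow 2 x).const_mul κ).const_add 1 |>.congr_deriv (by simp; ring)
  refine (hnum.div hden' hden).congr_deriv ?_
  rw [discoveryCubic, div_left_inj' (pow_ne_zero 2 hden)]
  ring

theorem continuous_discoveryBound (hκ : 0 ≤ κ) : Continuous (discoveryBound κ) :=
  continuous_iff_continuousAt.2 fun x => (hasDerivAt_discoveryBound hκ x).continuousAt

theorem strictAntiOn_discoveryCubic (hκ : 0 ≤ κ) : StrictAntiOn (discoveryCubic κ) (Ici 0) := by
  intro a ha b _ hab
  have hcube : κ * a ^ 3 ≤ κ * b ^ 3 :=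
    mul_le_mul_of_nonneg_left (pow_le_pow_left₀ ha hab.le 3) hκ
  simp only [discoveryCubic]
  linarith

variable {xh : ℝ}

theorem strictMonoOn_discoveryBound (hκ : 0 ≤ κ) (hroot : discoveryCubic κ xh = 0) :
    StrictMonoOn (discoveryBound κ) (Icc 0 xh) := by
  refine strictMonoOn_of_deriv_pos (convex_Icc 0 xh)
    (continuous_discoveryBound hκ).continuousOn fun x hx => ?_
  rw [interior_Icc] at hx
  have hu : 0 < discoveryCubic κ x := hroot ▸
    strictAntiOn_discoveryCubic hκ hx.1.le (hx.1.trans hx.2).le hx.2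
  rw [(hasDerivAt_discoveryBound hκ x).deriv]
  exact div_pos (mul_pos hx.1 hu) (by positivity)

theorem strictAntiOn_discoveryBound (hκ : 0 ≤ κ) (hxh : 0 ≤ xh)
    (hroot : discoveryCubic κ xh = 0) :
    StrictAntiOn (discoveryBound κ) (Ici xh) := by
  refine strictAntiOn_of_deriv_neg (convex_Ici xh)
    (continuous_discoveryBound hκ).continuousOn fun x hx => ?_
  rw [interior_Ici] at hx
  have hu : discoveryCubic κ x < 0 := hroot ▸
    strictAntiOn_discoveryCubic hκ hxh (hxh.trans hx.le) hx
  rw [(hasDerivAt_discoveryBound hκ x).deriv]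
  exact div_neg_of_neg_of_pos (mul_neg_of_pos_of_neg (hxh.trans_lt hx) hu) (by positivity)

end

theorem stmt_16_general (κ xh : ℝ) (hκ : 0 < κ) (hmem : xh ∈ Set.Ioo (0 : ℝ) 1)
    (hroot : -κ * xh ^ 3 - 3 * xh + 2 = 0) :
    StrictMonoOn (fun x : ℝ => x ^ 2 * (1 - x) / (1 + κ * x ^ 2)) (Set.Ioc 0 xh) ∧
    StrictAntiOn (fun x : ℝ => x ^ 2 * (1 - x) / (1 + κ * x ^ 2)) (Set.Ico xh 1) ∧
    ∀ x ∈ Set.Ioo (0 : ℝ) 1, x ≠ xh →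
      x ^ 2 * (1 - x) / (1 + κ * x ^ 2) < xh ^ 2 * (1 - xh) / (1 + κ * xh ^ 2) := by
  have hmono := strictMonoOn_discoveryBound hκ.le hroot
  have hanti := strictAntiOn_discoveryBound hκ.le hmem.1.le hroot
  refine ⟨hmono.mono Ioc_subset_Icc_self, hanti.mono Ico_subset_Ici_self, fun x hx hne => ?_⟩
  rcases hne.lt_or_gt with hlt | hgt
  · exact hmono ⟨hx.1.le, hlt.le⟩ ⟨hmem.1.le, le_rfl⟩ hlt
  · exact hanti self_mem_Ici hgt.le hgt

/-- With `x̂ ∈ (0,1)` the unique root of `-κx³ - 3x + 2` in `(0,1)`,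
`f(x) = x²(1-x)/(1 + κx²)` is strictly increasing on `(0, x̂]`, strictly
decreasing on `[x̂, 1)`, and attains its unique maximum on `(0,1)` at `x̂`. -/
theorem stmt_16 (κ xh : ℝ) (hκ : 0 < κ) (hmem : xh ∈ Set.Ioo (0 : ℝ) 1)
    (hroot : -κ * xh ^ 3 - 3 * xh + 2 = 0)
    (huniq : ∀ x ∈ Set.Ioo (0 : ℝ) 1, -κ * x ^ 3 - 3 * x + 2 = 0 → x = xh) :
    StrictMonoOn (fun x : ℝ => x ^ 2 * (1 - x) / (1 + κ * x ^ 2)) (Set.Ioc 0 xh) ∧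
    StrictAntiOn (fun x : ℝ => x ^ 2 * (1 - x) / (1 + κ * x ^ 2)) (Set.Ico xh 1) ∧
    ∀ x ∈ Set.Ioo (0 : ℝ) 1, x ≠ xh →
      x ^ 2 * (1 - x) / (1 + κ * x ^ 2) < xh ^ 2 * (1 - xh) / (1 + κ * xh ^ 2) :=
  stmt_16_general κ xh hκ hmem hroot
end

section
/- Let A be a real number, let c be a real number with 0 < c < 1, and let k be a nonnegative integer. Then for every ζ > 0, the k-th derivative at ζ of the function ζ ↦ exp(-A·ζ^c) equals exp(-A·ζ^c) · Σ_{l=0}^{k} (1/l!) · Σ_{j=0}^{l} (-1)^{l+j} · C(l,j) · A^l · (c(l-j))_{(k)} · ζ^{c·l - k}. -/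
/-!
Put `f z = exp (a z^c)`. By induction on `k`, `f⁽ᵏ⁾ z = f z · Σ_{l ≤ k} B_{k,l} z^{cl-k}`
with `B_{k+1,l+1} = a c B_{k,l} + (c(l+1) - k) B_{k,l+1}`. This recurrence is solved by
`B_{k,l} = a^l / l! · Δ^l g_k (0)`, where `g_k x = (c x)_{(k)}`: use `g_{k+1} x = (c x - k) g_k x`
and the discrete Leibniz rule `Δ^{l+1} (x g) (0) = (l+1) Δ^l g (1)`. The sum stops at `l = k`
since `g_k` is a polynomial of degree `k`, so `Δ^{k+1} g_k = 0`. Expanding `Δ^l` by the binomial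
theorem gives the stated double sum, with `a = -A`.
-/

open Finset Polynomial Function Real fwdDiff
open scoped Nat

theorem fwdDiff_iter_apply_add {M G : Type*} [AddCommMonoid M] [AddCommGroup G]
    (h : M) (f : M → G) (n : ℕ) (y : M) :
    Δ_[h] ^[n] f (y + h) = Δ_[h] ^[n] f y + Δ_[h] ^[n + 1] f y := by
  rw [iterate_succ_apply', fwdDiff]
  abel

section CommRing

variable {R : Type*} [CommRing R]

theorem fwdDiff_iter_succ_id_mul (h : R) (f : R → R) (n : ℕ) :
    Δ_[h] ^[n + 1] (fun x => x * f x) =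
      fun y => y * Δ_[h] ^[n + 1] f y + (n + 1) * h * Δ_[h] ^[n] f (y + h) := by
  induction n with
  | zero =>
    funext y
    simp only [zero_add, iterate_one, iterate_zero, id_eq, fwdDiff, Nat.cast_zero]
    ring
  | succ n ih =>
    funext y
    rw [iterate_succ_apply', ih, iterate_succ_apply' _ (n + 1) f]
    simp only [fwdDiff]
    rw [fwdDiff_iter_apply_add h f n (y + h)]
    push_cast
    ring

theorem sum_neg_one_pow_choose_mul_sub_eq_fwdDiff_iter (f : R → R) (n : ℕ) :
    ∑ j ∈ range (n + 1), (-1) ^ (n + j) * n.choose j * f (n - j) =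
      (-1) ^ n * Δ_[1] ^[n] f 0 := by
  rw [fwdDiff_iter_eq_sum_shift, mul_sum, ← sum_range_reflect]
  refine sum_congr rfl fun j hj => ?_
  have hj : j ≤ n := Nat.lt_succ_iff.mp (mem_range.mp hj)
  rw [add_tsub_cancel_right, Nat.choose_symm hj, Nat.cast_sub hj, sub_sub_cancel, zsmul_eq_mul,
    pow_add, zero_add, nsmul_one]
  push_cast
  ring

end CommRing

noncomputable def expRpowCoeff (a c : ℝ) (k l : ℕ) : ℝ :=
  a ^ l / l ! * Δ_[1] ^[l] ((descPochhammer ℝ k).comp (C c * X)).eval 0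

section expRpowCoeff

variable (a c : ℝ)

theorem expRpowCoeff_eq_zero_of_lt {k l : ℕ} (h : k < l) : expRpowCoeff a c k l = 0 := by
  have hdeg : ((descPochhammer ℝ k).comp (C c * X)).natDegree < l := calc
    _ ≤ (descPochhammer ℝ k).natDegree * (C c * X).natDegree := natDegree_comp_le
    _ ≤ k * 1 := by
      rw [descPochhammer_natDegree]
      gcongr
      exact (natDegree_C_mul_le c X).trans natDegree_X_le
    _ < l := by rwa [mul_one]
  rw [expRpowCoeff, fwdDiff_iter_eq_zero_of_degree_lt hdeg, Pi.zero_apply, mul_zero]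

theorem expRpowCoeff_succ_zero (k : ℕ) :
    expRpowCoeff a c (k + 1) 0 = -k * expRpowCoeff a c k 0 := by
  simp only [expRpowCoeff, iterate_zero, id_eq, eval_comp, eval_mul, eval_C, eval_X,
    descPochhammer_succ_eval]
  ring

theorem expRpowCoeff_succ_succ (k l : ℕ) :
    expRpowCoeff a c (k + 1) (l + 1) =
      a * c * expRpowCoeff a c k l + (c * (l + 1) - k) * expRpowCoeff a c k (l + 1) := by
  have hsucc : ((descPochhammer ℝ (k + 1)).comp (C c * X)).eval =
      c • (fun x => x * ((descPochhammer ℝ k).comp (C c * X)).eval x) +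
        (-k : ℝ) • ((descPochhammer ℝ k).comp (C c * X)).eval := by
    funext x
    simp only [eval_comp, eval_mul, eval_C, eval_X, descPochhammer_succ_eval, Pi.add_apply,
      Pi.smul_apply, smul_eq_mul]
    ring
  simp only [expRpowCoeff, hsucc, fwdDiff_iter_add, fwdDiff_iter_const_smul,
    fwdDiff_iter_succ_id_mul, Pi.add_apply, Pi.smul_apply, smul_eq_mul, fwdDiff_iter_apply_add]
  rw [Nat.factorial_succ]
  push_cast
  field_simp
  ring

theorem sum_expRpowCoeff_succ_mul_rpow (k : ℕ) {z : ℝ} (hz : 0 < z) :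
    ∑ l ∈ range (k + 2), expRpowCoeff a c (k + 1) l * z ^ (c * l - (k + 1 : ℕ)) =
      a * c * z ^ (c - 1) * ∑ l ∈ range (k + 1), expRpowCoeff a c k l * z ^ (c * l - k) +
        ∑ l ∈ range (k + 1), expRpowCoeff a c k l * ((c * l - k) * z ^ (c * l - k - 1)) := by
  have hshift (l : ℕ) :
      z ^ (c - 1) * z ^ (c * l - k) = z ^ (c * (l + 1 : ℕ) - (k + 1 : ℕ)) := by
    rw [← rpow_add hz]
    push_cast
    ring_nf
  calc ∑ l ∈ range (k + 2), expRpowCoeff a c (k + 1) l * z ^ (c * l - (k + 1 : ℕ))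
      = ∑ l ∈ range (k + 1),
            a * c * expRpowCoeff a c k l * z ^ (c * (l + 1 : ℕ) - (k + 1 : ℕ)) +
          ∑ l ∈ range (k + 2),
            expRpowCoeff a c k l * ((c * l - k) * z ^ (c * l - (k + 1 : ℕ))) := by
        rw [sum_range_succ' _ (k + 1),
          sum_range_succ' (fun l => expRpowCoeff a c k l * _) (k + 1), expRpowCoeff_succ_zero,
          ← add_assoc, ← sum_add_distrib]
        congr 1
        · refine sum_congr rfl fun l _ => ?_
          rw [expRpowCoeff_succ_succ]
          push_cast
          ring
        · push_cast
          ring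
    _ = _ := by
        rw [sum_range_succ _ (k + 1), expRpowCoeff_eq_zero_of_lt a c k.lt_succ_self, zero_mul,
          add_zero, mul_sum]
        congr 1
        · refine sum_congr rfl fun l _ => ?_
          rw [← hshift]
          ring
        · push_cast
          simp_rw [sub_sub]

theorem hasDerivAt_exp_mul_rpow_mul_sum (k : ℕ) {z : ℝ} (hz : 0 < z) :
    HasDerivAt
      (fun w => exp (a * w ^ c) * ∑ l ∈ range (k + 1), expRpowCoeff a c k l * w ^ (c * l - k))
      (exp (a * z ^ c) *
        ∑ l ∈ range (k + 2), expRpowCoeff a c (k + 1) l * z ^ (c * l - (k + 1 : ℕ))) z := by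
  have hexp :
      HasDerivAt (fun w => exp (a * w ^ c)) (exp (a * z ^ c) * (a * (c * z ^ (c - 1)))) z :=
    ((hasDerivAt_rpow_const (Or.inl hz.ne')).const_mul a).exp
  have hsum : HasDerivAt (fun w => ∑ l ∈ range (k + 1), expRpowCoeff a c k l * w ^ (c * l - k))
      (∑ l ∈ range (k + 1), expRpowCoeff a c k l * ((c * l - k) * z ^ (c * l - k - 1))) z :=
    HasDerivAt.fun_sum fun l _ => (hasDerivAt_rpow_const (Or.inl hz.ne')).const_mul _
  refine (hexp.mul hsum).congr_deriv ?_
  rw [sum_expRpowCoeff_succ_mul_rpow a c k hz]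
  ring

theorem iteratedDeriv_exp_mul_rpow (k : ℕ) {z : ℝ} (hz : 0 < z) :
    iteratedDeriv k (fun w => exp (a * w ^ c)) z =
      exp (a * z ^ c) * ∑ l ∈ range (k + 1), expRpowCoeff a c k l * z ^ (c * l - k) := by
  induction k generalizing z with
  | zero => simp [expRpowCoeff]
  | succ k ih =>
    have hloc : iteratedDeriv k (fun w => exp (a * w ^ c)) =ᶠ[nhds z] fun w =>
        exp (a * w ^ c) * ∑ l ∈ range (k + 1), expRpowCoeff a c k l * w ^ (c * l - k) :=
      Filter.eventually_of_mem (Ioi_mem_nhds hz) fun w hw => ih hw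
    rw [iteratedDeriv_succ, hloc.deriv_eq, (hasDerivAt_exp_mul_rpow_mul_sum a c k hz).deriv]

end expRpowCoeff

theorem expRpowCoeff_neg (A c : ℝ) (k l : ℕ) :
    expRpowCoeff (-A) c k l = 1 / (l ! : ℝ) * ∑ j ∈ range (l + 1),
      (-1) ^ (l + j) * l.choose j * A ^ l * (descPochhammer ℝ k).eval (c * (l - j)) := by
  calc expRpowCoeff (-A) c k l
      = 1 / (l ! : ℝ) * A ^ l *
          ((-1) ^ l * Δ_[1] ^[l] ((descPochhammer ℝ k).comp (C c * X)).eval 0) := by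
        rw [expRpowCoeff, neg_pow]
        ring
    _ = _ := by
        rw [← sum_neg_one_pow_choose_mul_sub_eq_fwdDiff_iter, mul_assoc, mul_sum]
        refine congrArg _ (sum_congr rfl fun j _ => ?_)
        rw [eval_comp, eval_mul, eval_C, eval_X]
        ring

theorem stmt_18_general (A c : ℝ) (k : ℕ) (ζ : ℝ) (hζ : 0 < ζ) :
    iteratedDeriv k (fun z : ℝ => Real.exp (-(A * z ^ c))) ζ
      = Real.exp (-(A * ζ ^ c)) *
          ∑ l ∈ Finset.range (k + 1), (1 / (l.factorial : ℝ)) *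
            ∑ j ∈ Finset.range (l + 1),
              (-1 : ℝ) ^ (l + j) * (l.choose j : ℝ) * A ^ l *
                (descPochhammer ℝ k).eval (c * ((l : ℝ) - (j : ℝ))) *
                ζ ^ (c * (l : ℝ) - (k : ℝ)) := by
  have h := iteratedDeriv_exp_mul_rpow (-A) c k hζ
  simp only [neg_mul] at h
  rw [h]
  refine congrArg _ (sum_congr rfl fun l _ => ?_)
  rw [expRpowCoeff_neg, mul_assoc, sum_mul]

/-- Equation (18) of the paper: for `0 < c < 1` and `ζ > 0`, the
`k`-th derivative at `ζ` of `ζ ↦ exp(-A ζ^c)` equals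
`exp(-A ζ^c) Σ_{l=0}^{k} (1/l!) Σ_{j=0}^{l} (-1)^{l+j} C(l,j) A^l (c(l-j))_{(k)} ζ^{cl-k}`. -/
theorem stmt_18 (A c : ℝ) (hc0 : 0 < c) (hc1 : c < 1) (k : ℕ) (ζ : ℝ) (hζ : 0 < ζ) :
    iteratedDeriv k (fun z : ℝ => Real.exp (-(A * z ^ c))) ζ
      = Real.exp (-(A * ζ ^ c)) *
          ∑ l ∈ Finset.range (k + 1), (1 / (l.factorial : ℝ)) *
            ∑ j ∈ Finset.range (l + 1),
              (-1 : ℝ) ^ (l + j) * (l.choose j : ℝ) * A ^ l *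
                (descPochhammer ℝ k).eval (c * ((l : ℝ) - (j : ℝ))) *
                ζ ^ (c * (l : ℝ) - (k : ℝ)) :=
  stmt_18_general A c k ζ hζ
end

section
/- Let k be a nonnegative integer and let f : ℝ → ℝ be k-times continuously differentiable. Then for every z ∈ ℝ, the k-th derivative at z of the function z ↦ exp(f(z)) equals exp(f(z)) · Σ_{l=0}^{k} (1/l!) · Σ_{j=0}^{l} (-1)^j · C(l,j) · f(z)^j · D^k[f^{l-j}](z), where D^k[f^{l-j}](z) denotes the k-th derivative at z of the function z ↦ f(z)^{l-j}. -/
/-!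
Put `c = f z` and `g = f - c`, so that `exp ∘ f = exp c • (exp ∘ g)` and `g z = 0`. By Faà di Bruno,
the `k`-th derivative of `ψ ∘ g` at `z` depends on `ψ` only through its derivatives of order `≤ k`
at `g z = 0`; hence `exp` may be replaced by its Taylor polynomial `∑_{l ≤ k} y^l / l!`, and the
binomial expansion of `(f - c)^l` gives the formula.
-/

open Finset

section

variable {𝕜 : Type*} [NontriviallyNormedField 𝕜]

theorem iteratedDeriv_comp_congr {n : ℕ} {φ ψ f : 𝕜 → 𝕜} {x : 𝕜}
    (hφ : ContDiffAt 𝕜 n φ (f x)) (hψ : ContDiffAt 𝕜 n ψ (f x)) (hf : ContDiffAt 𝕜 n f x)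
    (h : ∀ i ≤ n, iteratedDeriv i φ (f x) = iteratedDeriv i ψ (f x)) :
    iteratedDeriv n (φ ∘ f) x = iteratedDeriv n (ψ ∘ f) x := by
  rw [iteratedDeriv_comp_eq_sum_orderedFinpartition hφ hf le_rfl,
    iteratedDeriv_comp_eq_sum_orderedFinpartition hψ hf le_rfl]
  exact sum_congr rfl fun c _ => by rw [h c.length c.length_le]

variable (𝕜) in
noncomputable def expPartialSum (k : ℕ) (y : 𝕜) : 𝕜 :=
  ∑ l ∈ range (k + 1), 1 / (l.factorial : 𝕜) * y ^ l

theorem contDiff_expPartialSum (k : ℕ) {n : WithTop ℕ∞} : ContDiff 𝕜 n (expPartialSum 𝕜 k) :=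
  .sum fun l _ => contDiff_const.mul (contDiff_id.pow l)

theorem iteratedDeriv_expPartialSum_zero [CharZero 𝕜] {i k : ℕ} (hi : i ≤ k) :
    iteratedDeriv i (expPartialSum 𝕜 k) 0 = 1 := by
  unfold expPartialSum
  rw [iteratedDeriv_fun_sum fun l _ => (contDiff_const.mul (contDiff_id.pow l)).contDiffAt]
  simp only [iteratedDeriv_const_mul_field, iteratedDeriv_fun_pow_zero]
  rw [sum_eq_single_of_mem i (mem_range.2 (Nat.lt_succ_of_le hi))]
  · simp [Nat.factorial_ne_zero]
  · intro l _ hl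
    simp [Ne.symm hl]

end

theorem sub_pow_eq_sum_choose {R : Type*} [CommRing R] (x y : R) (n : ℕ) :
    (x - y) ^ n = ∑ j ∈ range (n + 1), (-1) ^ j * (n.choose j : R) * y ^ j * x ^ (n - j) := by
  rw [sub_eq_neg_add, add_pow]
  exact sum_congr rfl fun j _ => by rw [neg_pow]; ring

theorem Real.iteratedDeriv_exp (n : ℕ) : iteratedDeriv n Real.exp = Real.exp := by
  rw [iteratedDeriv_eq_iterate, Real.iter_deriv_exp]

/-- The higher-order derivative formula for `exp(f(z))` used in
Appendix B of the paper: for `f` k-times continuously differentiable,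
`D^k[exp ∘ f](z) = exp(f(z)) Σ_{l=0}^{k} (1/l!) Σ_{j=0}^{l} (-1)^j C(l,j) f(z)^j
 D^k[f^{l-j}](z)`. -/
theorem stmt_19 (k : ℕ) (f : ℝ → ℝ) (hf : ContDiff ℝ k f) (z : ℝ) :
    iteratedDeriv k (fun z : ℝ => Real.exp (f z)) z
      = Real.exp (f z) *
          ∑ l ∈ Finset.range (k + 1), (1 / (l.factorial : ℝ)) *
            ∑ j ∈ Finset.range (l + 1),
              (-1 : ℝ) ^ j * (l.choose j : ℝ) * (f z) ^ j *
                iteratedDeriv k (fun z : ℝ => (f z) ^ (l - j)) z := by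
  set c := f z
  have hg : ContDiff ℝ k (fun w => f w - c) := hf.sub contDiff_const
  have hexp : (fun w => Real.exp (f w)) = fun w => Real.exp c * (Real.exp ∘ (f · - c)) w := by
    funext w
    simp [← Real.exp_add]
  have htaylor : iteratedDeriv k (Real.exp ∘ (f · - c)) z
      = iteratedDeriv k (expPartialSum ℝ k ∘ (f · - c)) z :=
    iteratedDeriv_comp_congr Real.contDiff_exp.contDiffAt (contDiff_expPartialSum k).contDiffAt
      hg.contDiffAt fun i hi => by
        simp [c, Real.iteratedDeriv_exp, iteratedDeriv_expPartialSum_zero hi]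
  have hbinom : expPartialSum ℝ k ∘ (f · - c) = fun w => ∑ l ∈ range (k + 1),
      1 / (l.factorial : ℝ) *
        ∑ j ∈ range (l + 1), (-1) ^ j * (l.choose j : ℝ) * c ^ j * f w ^ (l - j) := by
    funext w
    simp only [Function.comp, expPartialSum, sub_pow_eq_sum_choose]
  have hpow : ∀ l j, ContDiff ℝ k fun w => (-1) ^ j * (l.choose j : ℝ) * c ^ j * f w ^ (l - j) :=
    fun _ _ => contDiff_const.mul (hf.pow _)
  rw [hexp, iteratedDeriv_const_mul_field, htaylor, hbinom,
    iteratedDeriv_fun_sum fun l _ => (contDiff_const.mul (.sum fun j _ => hpow l j)).contDiffAt]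
  refine congrArg _ (sum_congr rfl fun l _ => ?_)
  rw [iteratedDeriv_const_mul_field, iteratedDeriv_fun_sum fun j _ => (hpow l j).contDiffAt]
  simp only [iteratedDeriv_const_mul_field]
end
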